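/- arXiv:2010.00137 — 3 statements merged into one kernel-verified Lean document; each statement's English description precedes it below -/
import Mathlib

section
/- Let d ≥ 1, let D ∈ ℝ^{d×d} be a diagonal positive semidefinite matrix with largest diagonal entry D_max, and let n ≥ 1 be a real number. Then for every x ∈ ℝ^d with ‖x‖ = 1, we have −D_max²/(2n) ≤ n·log(xᵀ(I + D/n)x) − xᵀDx ≤ 0. -/
open Matrix Real

/-!
For a unit vector `x`, the quadratic form `q = xᵀDx` of the diagonal matrix `D` lies in `[0, D_max]`
and `xᵀ(I + D/n)x = 1 + q/n`. The claim thus reduces to the scalar bounds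
`q - q²/(2n) ≤ n log (1 + q/n) ≤ q`, i.e. `t - t²/2 ≤ log (1 + t) ≤ t` for `t = q/n ≥ 0`.
-/

theorem Real.sub_sq_div_two_le_log_one_add {t : ℝ} (ht : 0 ≤ t) :
    t - t ^ 2 / 2 ≤ log (1 + t) := by
  refine le_trans ?_ (le_log_one_add_of_nonneg ht)
  rw [le_div_iff₀ (by positivity)]
  nlinarith [pow_nonneg ht 3]

theorem Real.mul_log_one_add_div_le {q n : ℝ} (hn : 0 < n) (hq : 0 ≤ q) :
    n * log (1 + q / n) ≤ q := by
  have hlog : log (1 + q / n) ≤ q / n := by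
    linarith [log_le_sub_one_of_pos (by positivity : 0 < 1 + q / n)]
  calc n * log (1 + q / n) ≤ n * (q / n) := mul_le_mul_of_nonneg_left hlog hn.le
    _ = q := mul_div_cancel₀ q hn.ne'

theorem Real.sub_sq_div_le_mul_log_one_add_div {q n : ℝ} (hn : 0 < n) (hq : 0 ≤ q) :
    q - q ^ 2 / (2 * n) ≤ n * log (1 + q / n) := by
  calc q - q ^ 2 / (2 * n) = n * (q / n - (q / n) ^ 2 / 2) := by field_simp
    _ ≤ n * log (1 + q / n) :=
      mul_le_mul_of_nonneg_left (sub_sq_div_two_le_log_one_add (by positivity)) hn.le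

namespace Matrix.IsDiag

variable {ι : Type*} [Fintype ι] {D : Matrix ι ι ℝ}

theorem dotProduct_mulVec_self (hD : D.IsDiag) (x : ι → ℝ) :
    x ⬝ᵥ (D *ᵥ x) = ∑ i, D i i * x i ^ 2 := by
  classical
  conv_lhs => rw [← hD.diagonal_diag]
  simp only [dotProduct, mulVec_diagonal, diag_apply]
  exact Finset.sum_congr rfl fun i _ => by ring

theorem dotProduct_mulVec_self_nonneg (hD : D.IsDiag) (hpsd : ∀ i, 0 ≤ D i i) (x : ι → ℝ) :
    0 ≤ x ⬝ᵥ (D *ᵥ x) := by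
  rw [hD.dotProduct_mulVec_self]
  exact Finset.sum_nonneg fun i _ => mul_nonneg (hpsd i) (sq_nonneg _)

theorem dotProduct_mulVec_self_le (hD : D.IsDiag) {M : ℝ} (hle : ∀ i, D i i ≤ M) (x : ι → ℝ) :
    x ⬝ᵥ (D *ᵥ x) ≤ M * (x ⬝ᵥ x) := by
  rw [hD.dotProduct_mulVec_self, dotProduct, Finset.mul_sum]
  exact Finset.sum_le_sum fun i _ => by
    rw [← sq]
    exact mul_le_mul_of_nonneg_right (hle i) (sq_nonneg _)

end Matrix.IsDiag

theorem EuclideanSpace.dotProduct_self_eq_one {ι : Type*} [Fintype ι] {x : EuclideanSpace ℝ ι}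
    (hx : ‖x‖ = 1) : x ⬝ᵥ x = 1 := by
  have := real_inner_self_eq_norm_sq x
  rw [EuclideanSpace.inner_eq_star_dotProduct] at this
  simpa [hx] using this

theorem stmt_0_general (d : ℕ) (D : Matrix (Fin d) (Fin d) ℝ)
    (hdiag : D.IsDiag) (hpsd : ∀ i, 0 ≤ D i i)
    (Dmax : ℝ) (hle : ∀ i, D i i ≤ Dmax)
    (n : ℝ) (hn : 1 ≤ n)
    (x : EuclideanSpace ℝ (Fin d)) (hx : ‖x‖ = 1) :
    -Dmax ^ 2 / (2 * n) ≤ n * Real.log (x ⬝ᵥ ((1 + n⁻¹ • D) *ᵥ x)) - x ⬝ᵥ (D *ᵥ x) ∧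
      n * Real.log (x ⬝ᵥ ((1 + n⁻¹ • D) *ᵥ x)) - x ⬝ᵥ (D *ᵥ x) ≤ 0 := by
  have hn0 : 0 < n := by linarith
  have hxx := EuclideanSpace.dotProduct_self_eq_one hx
  set q := x ⬝ᵥ (D *ᵥ x)
  have hq0 : 0 ≤ q := hdiag.dotProduct_mulVec_self_nonneg hpsd x
  have hqD : q ≤ Dmax := by simpa [hxx] using hdiag.dotProduct_mulVec_self_le hle x
  have harg : x ⬝ᵥ ((1 + n⁻¹ • D) *ᵥ x) = 1 + q / n := by
    rw [add_mulVec, one_mulVec, smul_mulVec, dotProduct_add, dotProduct_smul, hxx, smul_eq_mul,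
      inv_mul_eq_div]
  rw [harg]
  have hsq : q ^ 2 / (2 * n) ≤ Dmax ^ 2 / (2 * n) := by gcongr
  constructor
  · linarith [neg_div (2 * n) (Dmax ^ 2), sub_sq_div_le_mul_log_one_add_div hn0 hq0]
  · linarith [mul_log_one_add_div_le hn0 hq0]

theorem stmt_0 (d : ℕ) (hd : 1 ≤ d) (D : Matrix (Fin d) (Fin d) ℝ)
    (hdiag : D.IsDiag) (hpsd : ∀ i, 0 ≤ D i i)
    (Dmax : ℝ) (hle : ∀ i, D i i ≤ Dmax) (hmem : ∃ i, D i i = Dmax)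
    (n : ℝ) (hn : 1 ≤ n)
    (x : EuclideanSpace ℝ (Fin d)) (hx : ‖x‖ = 1) :
    -Dmax ^ 2 / (2 * n) ≤ n * Real.log (x ⬝ᵥ ((1 + n⁻¹ • D) *ᵥ x)) - x ⬝ᵥ (D *ᵥ x) ∧
      n * Real.log (x ⬝ᵥ ((1 + n⁻¹ • D) *ᵥ x)) - x ⬝ᵥ (D *ᵥ x) ≤ 0 :=
  stmt_0_general d D hdiag hpsd Dmax hle n hn x hx
end

section
/- Let d ≥ 1, let D ∈ ℝ^{d×d} be a diagonal positive semidefinite matrix with largest diagonal entry D_max, and let n ≥ 1 be a real number. Then for every x ∈ ℝ^d with ‖x‖ = 1, we have exp(−D_max²/(2n)) ≤ (xᵀ(I + D/n)x)^n / exp(xᵀDx) ≤ 1. -/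
/-!
With `s = xᵀDx`, the diagonal form gives `0 ≤ s ≤ D_max` on the unit sphere, and the quotient is
`(1 + s/n)^n / exp s`. It is at most `1` because `1 + t ≤ exp t`. For the lower bound,
`log (1 + t) ≥ t - t²/2` for `t ≥ 0` gives `(1 + s/n)^n ≥ exp (s - s²/(2n)) ≥ exp (s - D_max²/(2n))`.
-/

open Matrix Real

namespace Real

lemma sub_sq_div_two_le_log_one_add_s1 {t : ℝ} (ht : 0 ≤ t) : t - t ^ 2 / 2 ≤ log (1 + t) := by
  refine le_trans ?_ (le_log_one_add_of_nonneg ht)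
  rw [le_div_iff₀ (by linarith)]
  nlinarith [sq_nonneg t, mul_nonneg ht (sq_nonneg t)]

lemma one_add_div_rpow_le_exp {s n : ℝ} (hn : 0 < n) (hs : -n ≤ s) : (1 + s / n) ^ n ≤ exp s := by
  have h1 : 0 ≤ 1 + s / n := by
    rw [← div_self hn.ne', ← add_div]; exact div_nonneg (by linarith) hn.le
  calc (1 + s / n) ^ n ≤ exp (s / n) ^ n := by
        gcongr; linarith [add_one_le_exp (s / n)]
    _ = exp s := by rw [← exp_mul, div_mul_cancel₀ _ hn.ne']

lemma exp_sub_sq_div_le_one_add_div_rpow {s n : ℝ} (hn : 0 < n) (hs : 0 ≤ s) :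
    exp (s - s ^ 2 / (2 * n)) ≤ (1 + s / n) ^ n := by
  have hpos : 0 < 1 + s / n := by positivity
  calc exp (s - s ^ 2 / (2 * n)) = exp (s / n - (s / n) ^ 2 / 2) ^ n := by
        rw [← exp_mul]; congr 1; field_simp
    _ ≤ exp (log (1 + s / n)) ^ n := by
        gcongr; exact sub_sq_div_two_le_log_one_add_s1 (by positivity)
    _ = (1 + s / n) ^ n := by rw [exp_log hpos]

end Real

namespace Matrix

variable {ι R : Type*} [Fintype ι] [DecidableEq ι] [CommRing R] {D : Matrix ι ι R}

lemma IsDiag.dotProduct_mulVec_self_s1 (hD : D.IsDiag) (x : ι → R) :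
    x ⬝ᵥ (D *ᵥ x) = ∑ i, D i i * x i ^ 2 := by
  rw [← hD.diagonal_diag, dotProduct]
  simp only [mulVec_diagonal, diagonal_apply_eq]
  exact Finset.sum_congr rfl fun i _ => by ring

variable [LinearOrder R] [IsStrictOrderedRing R]

lemma IsDiag.dotProduct_mulVec_self_nonneg_s1 (hD : D.IsDiag) (hpsd : ∀ i, 0 ≤ D i i) (x : ι → R) :
    0 ≤ x ⬝ᵥ (D *ᵥ x) := by
  rw [hD.dotProduct_mulVec_self_s1]
  exact Finset.sum_nonneg fun i _ => mul_nonneg (hpsd i) (sq_nonneg _)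

lemma IsDiag.dotProduct_mulVec_self_le_s1 (hD : D.IsDiag) {c : R} (hle : ∀ i, D i i ≤ c) (x : ι → R) :
    x ⬝ᵥ (D *ᵥ x) ≤ c * (x ⬝ᵥ x) := by
  rw [hD.dotProduct_mulVec_self_s1, dotProduct, Finset.mul_sum]
  exact Finset.sum_le_sum fun i _ => by
    rw [← sq]; exact mul_le_mul_of_nonneg_right (hle i) (sq_nonneg _)

end Matrix

lemma EuclideanSpace.dotProduct_self_eq_norm_sq {ι : Type*} [Fintype ι] (x : EuclideanSpace ℝ ι) :
    x ⬝ᵥ x = ‖x‖ ^ 2 := by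
  rw [← real_inner_self_eq_norm_sq, EuclideanSpace.inner_eq_star_dotProduct, star_trivial]

theorem stmt_1_general (d : ℕ) (D : Matrix (Fin d) (Fin d) ℝ)
    (hdiag : D.IsDiag) (hpsd : ∀ i, 0 ≤ D i i)
    (Dmax : ℝ) (hle : ∀ i, D i i ≤ Dmax)
    (n : ℝ) (hn : 1 ≤ n)
    (x : EuclideanSpace ℝ (Fin d)) (hx : ‖x‖ = 1) :
    Real.exp (-Dmax ^ 2 / (2 * n)) ≤
        (x ⬝ᵥ ((1 + n⁻¹ • D) *ᵥ x)) ^ n / Real.exp (x ⬝ᵥ (D *ᵥ x)) ∧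
      (x ⬝ᵥ ((1 + n⁻¹ • D) *ᵥ x)) ^ n / Real.exp (x ⬝ᵥ (D *ᵥ x)) ≤ 1 := by
  have hn0 : 0 < n := by linarith
  have hxx : x ⬝ᵥ x = 1 := by rw [EuclideanSpace.dotProduct_self_eq_norm_sq, hx, one_pow]
  set s := x ⬝ᵥ (D *ᵥ x)
  have hs0 : 0 ≤ s := hdiag.dotProduct_mulVec_self_nonneg_s1 hpsd x
  have hsD : s ≤ Dmax := by simpa [hxx] using hdiag.dotProduct_mulVec_self_le_s1 hle x
  have hquad : x ⬝ᵥ ((1 + n⁻¹ • D) *ᵥ x) = 1 + s / n := by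
    rw [add_mulVec, one_mulVec, smul_mulVec, dotProduct_add, dotProduct_smul, hxx, smul_eq_mul,
      inv_mul_eq_div]
  rw [hquad, le_div_iff₀ (exp_pos s), div_le_one (exp_pos s), ← exp_add]
  refine ⟨le_trans ?_ (exp_sub_sq_div_le_one_add_div_rpow hn0 hs0),
    one_add_div_rpow_le_exp hn0 (by linarith)⟩
  have hsq : s ^ 2 / (2 * n) ≤ Dmax ^ 2 / (2 * n) := by gcongr
  rw [exp_le_exp, neg_div]
  linarith

theorem stmt_1 (d : ℕ) (hd : 1 ≤ d) (D : Matrix (Fin d) (Fin d) ℝ)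
    (hdiag : D.IsDiag) (hpsd : ∀ i, 0 ≤ D i i)
    (Dmax : ℝ) (hle : ∀ i, D i i ≤ Dmax) (hmem : ∃ i, D i i = Dmax)
    (n : ℝ) (hn : 1 ≤ n)
    (x : EuclideanSpace ℝ (Fin d)) (hx : ‖x‖ = 1) :
    Real.exp (-Dmax ^ 2 / (2 * n)) ≤
        (x ⬝ᵥ ((1 + n⁻¹ • D) *ᵥ x)) ^ n / Real.exp (x ⬝ᵥ (D *ᵥ x)) ∧
      (x ⬝ᵥ ((1 + n⁻¹ • D) *ᵥ x)) ^ n / Real.exp (x ⬝ᵥ (D *ᵥ x)) ≤ 1 :=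
  stmt_1_general d D hdiag hpsd Dmax hle n hn x hx
end

section
/- Let d ≥ 1, let D ∈ ℝ^{d×d} be a diagonal positive semidefinite matrix with largest diagonal entry D_max, and let n be a real number with n ≥ 1 and n ≥ D_max². Then for every x ∈ ℝ^d with ‖x‖ = 1, the acceptance probability a(x) = e^{−1} · exp(xᵀDx) / (xᵀ(I + D/n)x)^n satisfies e^{−1} ≤ a(x) ≤ e^{−1/2}; in particular a(x) ≤ 1. -/
open Matrix Real

lemma aux_log_lb (t : ℝ) (ht : 0 ≤ t) : t - t ^ 2 / 2 ≤ Real.log (1 + t) := by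
  have key : MonotoneOn (fun s : ℝ => Real.log (1 + s) - s + s ^ 2 / 2) (Set.Ici 0) := by
    apply monotoneOn_of_deriv_nonneg (convex_Ici 0)
    · apply ContinuousOn.add
      apply ContinuousOn.sub
      · apply ContinuousOn.log (by fun_prop)
        intro s hs
        simp only [Set.mem_Ici] at hs
        linarith
      · fun_prop
      · fun_prop
    · intro s hs
      rw [interior_Ici] at hs
      simp only [Set.mem_Ioi] at hs
      have h1 : (0:ℝ) < 1 + s := by linarith
      apply DifferentiableWithinAt.add
      apply DifferentiableWithinAt.sub
      · exact (((differentiable_const 1).add differentiable_id).differentiableAt.log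
          h1.ne').differentiableWithinAt
      · exact differentiableWithinAt_id
      · fun_prop
    · intro s hs
      rw [interior_Ici] at hs
      simp only [Set.mem_Ioi] at hs
      have h1 : (0:ℝ) < 1 + s := by linarith
      have hd : HasDerivAt (fun s : ℝ => Real.log (1 + s) - s + s ^ 2 / 2)
          ((1 + s)⁻¹ * 1 - 1 + s) s := by
        have hlog : HasDerivAt (fun s : ℝ => Real.log (1 + s)) ((1 + s)⁻¹ * 1) s := by
          have := (Real.hasDerivAt_log h1.ne').comp s
            ((hasDerivAt_const s 1).add (hasDerivAt_id s))
          simpa [Function.comp_def] using this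
        have hsq : HasDerivAt (fun s : ℝ => s ^ 2 / 2) s s := by
          have := (hasDerivAt_pow 2 s).div_const 2
          simpa using this
        exact (hlog.sub (hasDerivAt_id s)).add hsq
      rw [hd.deriv]
      have : (1 + s)⁻¹ * 1 - 1 + s = s ^ 2 / (1 + s) := by
        field_simp
        ring
      rw [this]
      positivity
  have h0 : (fun s : ℝ => Real.log (1 + s) - s + s ^ 2 / 2) 0 ≤
      (fun s : ℝ => Real.log (1 + s) - s + s ^ 2 / 2) t :=
    key (Set.self_mem_Ici) ht ht
  simp only [add_zero, Real.log_one] at h0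
  linarith

lemma aux_scalar (q n : ℝ) (hq : 0 ≤ q) (hqn : q ^ 2 ≤ n) (hn : 1 ≤ n) :
    Real.exp (q - 1 / 2) ≤ (1 + q / n) ^ n ∧ (1 + q / n) ^ n ≤ Real.exp q := by
  have hn0 : (0:ℝ) < n := by linarith
  have ht : 0 ≤ q / n := div_nonneg hq hn0.le
  have hb : (0:ℝ) < 1 + q / n := by linarith
  have hpow : (1 + q / n) ^ n = Real.exp (n * Real.log (1 + q / n)) := by
    rw [Real.rpow_def_of_pos hb, mul_comm]
  constructor
  · rw [hpow]
    apply Real.exp_le_exp.mpr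
    have := aux_log_lb (q / n) ht
    have h2 : q / n - (q / n) ^ 2 / 2 ≤ Real.log (1 + q / n) := this
    have h3 : q - q ^ 2 / (2 * n) ≤ n * Real.log (1 + q / n) := by
      have := mul_le_mul_of_nonneg_left h2 hn0.le
      calc q - q ^ 2 / (2 * n) = n * (q / n - (q / n) ^ 2 / 2) := by
            field_simp
        _ ≤ n * Real.log (1 + q / n) := this
    have h4 : q ^ 2 / (2 * n) ≤ 1 / 2 := by
      rw [div_le_div_iff₀ (by linarith) (by norm_num)]
      linarith
    linarith
  · rw [hpow]
    apply Real.exp_le_exp.mpr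
    have := Real.log_le_sub_one_of_pos hb
    have : Real.log (1 + q / n) ≤ q / n := by linarith
    calc n * Real.log (1 + q / n) ≤ n * (q / n) := by
          exact mul_le_mul_of_nonneg_left this hn0.le
      _ = q := by field_simp

theorem stmt_4 (d : ℕ) (hd : 1 ≤ d) (D : Matrix (Fin d) (Fin d) ℝ)
    (hdiag : D.IsDiag) (hpsd : ∀ i, 0 ≤ D i i)
    (Dmax : ℝ) (hle : ∀ i, D i i ≤ Dmax) (hmem : ∃ i, D i i = Dmax)
    (n : ℝ) (hn : 1 ≤ n) (hnD : Dmax ^ 2 ≤ n)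
    (x : EuclideanSpace ℝ (Fin d)) (hx : ‖x‖ = 1)
    (a : ℝ)
    (ha : a = Real.exp (-1) * Real.exp (x ⬝ᵥ (D *ᵥ x)) /
        (x ⬝ᵥ ((1 + n⁻¹ • D) *ᵥ x)) ^ n) :
    (Real.exp (-1) ≤ a ∧ a ≤ Real.exp (-(1 / 2))) ∧ a ≤ 1 := by
  have hn0 : (0:ℝ) < n := by linarith
  -- sum of squares equals 1
  have hsum : ∑ i, (x : Fin d → ℝ) i ^ 2 = 1 := by
    have h := EuclideanSpace.norm_eq x
    rw [hx] at h
    have h2 : Real.sqrt (∑ i, ‖(x : Fin d → ℝ) i‖ ^ 2) = 1 := h.symm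
    have h3 : ∑ i, ‖(x : Fin d → ℝ) i‖ ^ 2 = 1 := by
      have hnn : 0 ≤ ∑ i, ‖(x : Fin d → ℝ) i‖ ^ 2 :=
        Finset.sum_nonneg fun i _ => sq_nonneg _
      nlinarith [Real.sq_sqrt hnn, Real.sqrt_nonneg (∑ i, ‖(x : Fin d → ℝ) i‖ ^ 2)]
    simpa [Real.norm_eq_abs, sq_abs] using h3
  -- q = x ⬝ᵥ D *ᵥ x = ∑ D i i * x i ^ 2
  set q : ℝ := x ⬝ᵥ (D *ᵥ x) with hqdef
  have hq_eq : q = ∑ i, D i i * (x : Fin d → ℝ) i ^ 2 := by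
    rw [hqdef]
    unfold dotProduct Matrix.mulVec dotProduct
    apply Finset.sum_congr rfl
    intro i _
    have : ∑ j, D i j * (x : Fin d → ℝ) j = D i i * (x : Fin d → ℝ) i := by
      rw [Finset.sum_eq_single i]
      · intro j _ hj
        rw [hdiag (Ne.symm hj), zero_mul]
      · intro h; exact absurd (Finset.mem_univ i) h
    rw [this]; ring
  have hq0 : 0 ≤ q := by
    rw [hq_eq]
    exact Finset.sum_nonneg fun i _ => mul_nonneg (hpsd i) (sq_nonneg _)
  have hqle : q ≤ Dmax := by
    rw [hq_eq]
    calc ∑ i, D i i * (x : Fin d → ℝ) i ^ 2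
        ≤ ∑ i, Dmax * (x : Fin d → ℝ) i ^ 2 := by
          apply Finset.sum_le_sum
          intro i _
          exact mul_le_mul_of_nonneg_right (hle i) (sq_nonneg _)
      _ = Dmax := by rw [← Finset.mul_sum, hsum, mul_one]
  have hDmax0 : 0 ≤ Dmax := by
    obtain ⟨i, hi⟩ := hmem
    exact hi ▸ hpsd i
  have hq2 : q ^ 2 ≤ n := le_trans (by nlinarith) hnD
  -- denominator
  have hden : x ⬝ᵥ ((1 + n⁻¹ • D) *ᵥ x) = 1 + q / n := by
    rw [Matrix.add_mulVec, Matrix.one_mulVec, Matrix.smul_mulVec,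
      dotProduct_add, dotProduct_smul]
    have hxx : x ⬝ᵥ (x : Fin d → ℝ) = 1 := by
      unfold dotProduct
      rw [← hsum]
      apply Finset.sum_congr rfl
      intro i _; ring
    rw [hxx, smul_eq_mul, ← hqdef]
    rw [div_eq_inv_mul]
  obtain ⟨hlow, hhigh⟩ := aux_scalar q n hq0 hq2 hn
  have hb : (0:ℝ) < 1 + q / n := by positivity
  have hpowpos : (0:ℝ) < (1 + q / n) ^ n := Real.rpow_pos_of_pos hb n
  rw [hden] at ha
  have h1 : Real.exp (-1) ≤ a := by
    rw [ha]
    rw [le_div_iff₀ hpowpos]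
    calc Real.exp (-1) * (1 + q / n) ^ n ≤ Real.exp (-1) * Real.exp q :=
          mul_le_mul_of_nonneg_left hhigh (Real.exp_pos _).le
      _ = Real.exp (-1) * Real.exp q := rfl
  have h2 : a ≤ Real.exp (-(1 / 2)) := by
    rw [ha, div_le_iff₀ hpowpos]
    calc Real.exp (-1) * Real.exp q = Real.exp (-(1/2)) * Real.exp (q - 1/2) := by
          rw [← Real.exp_add, ← Real.exp_add]; ring_nf
      _ ≤ Real.exp (-(1/2)) * (1 + q / n) ^ n :=
          mul_le_mul_of_nonneg_left hlow (Real.exp_pos _).le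
  refine ⟨⟨h1, h2⟩, h2.trans ?_⟩
  rw [show (1:ℝ) = Real.exp 0 by simp]
  exact Real.exp_le_exp.mpr (by norm_num)
end
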